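/- Let |R_i| = Σ_{t=1}^{n} Y_t where Y_t are independent Bernoulli variables with P(Y_t = 1) = (1/s)·min(1, s/t). Then for c ≥ 4, P(|R_i| ≥ 1 + c·log₂ n) ≤ n^{−c}. -/

import Mathlib

/-!
Chernoff's bound with parameter `log 4` gives `P(S ≥ a) ≤ 4^{-a} e^{3 E[S]}`, and
`E[S] ≤ H_n ≤ 1 + log n` because `P(Y_t = 1) ≤ 1/t`. For `a = 1 + c log₂ n` with `c ≥ 4` this is
at most `n^{-c}` once `n ≥ 8`. Below that the claim is degenerate: for `2 ≤ n < 8` the event is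
empty, since `S ≤ n < 1 + 4 log₂ n`, and for `n = 1` the bound is `1`.
-/

open MeasureTheory ProbabilityTheory Finset Real

section Bernoulli

variable {Ω : Type*} {X : Ω → ℝ}

lemma exp_mul_eq_of_zero_or_one (h01 : ∀ ω, X ω = 0 ∨ X ω = 1) (t : ℝ) :
    (fun ω ↦ exp (t * X ω)) = fun ω ↦ 1 + (exp t - 1) * {ω | X ω = 1}.indicator 1 ω := by
  ext ω
  rcases h01 ω with h | h <;> simp [Set.indicator, h]

variable [MeasurableSpace Ω] {μ : Measure Ω}

lemma integrable_exp_mul_of_zero_or_one [IsFiniteMeasure μ] (hX : Measurable X)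
    (h01 : ∀ ω, X ω = 0 ∨ X ω = 1) (t : ℝ) : Integrable (fun ω ↦ exp (t * X ω)) μ := by
  rw [exp_mul_eq_of_zero_or_one h01]
  exact (integrable_const 1).add
    (((integrable_const 1).indicator (hX (measurableSet_singleton 1))).const_mul _)

lemma mgf_eq_of_zero_or_one [IsProbabilityMeasure μ] (hX : Measurable X)
    (h01 : ∀ ω, X ω = 0 ∨ X ω = 1) (t : ℝ) :
    mgf X μ t = 1 + (exp t - 1) * μ.real {ω | X ω = 1} := by
  have hA : MeasurableSet {ω | X ω = 1} := hX (measurableSet_singleton 1)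
  rw [mgf, exp_mul_eq_of_zero_or_one h01, integral_add (integrable_const 1)
    (((integrable_const 1).indicator hA).const_mul _), integral_const_mul,
    integral_indicator_one hA]
  simp

lemma mgf_le_exp_of_zero_or_one [IsProbabilityMeasure μ] (hX : Measurable X)
    (h01 : ∀ ω, X ω = 0 ∨ X ω = 1) (t : ℝ) :
    mgf X μ t ≤ exp ((exp t - 1) * μ.real {ω | X ω = 1}) := by
  rw [mgf_eq_of_zero_or_one hX h01, add_comm]
  exact add_one_le_exp _

theorem measure_le_sum_le_of_zero_or_one [IsProbabilityMeasure μ] {ι : Type*} {Y : ι → Ω → ℝ}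
    {s : Finset ι} (hmeas : ∀ i, Measurable (Y i)) (hindep : iIndepFun Y μ)
    (h01 : ∀ i ∈ s, ∀ ω, Y i ω = 0 ∨ Y i ω = 1) (a : ℝ) {t : ℝ} (ht : 0 ≤ t) :
    μ {ω | a ≤ ∑ i ∈ s, Y i ω}
      ≤ ENNReal.ofReal (exp (-t * a + (exp t - 1) * ∑ i ∈ s, μ.real {ω | Y i ω = 1})) := by
  have hint : Integrable (fun ω ↦ exp (t * (∑ i ∈ s, Y i) ω)) μ :=
    hindep.integrable_exp_mul_sum hmeas fun i hi ↦
      integrable_exp_mul_of_zero_or_one (hmeas i) (h01 i hi) t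
  have hmgf : mgf (∑ i ∈ s, Y i) μ t ≤ exp ((exp t - 1) * ∑ i ∈ s, μ.real {ω | Y i ω = 1}) := by
    rw [hindep.mgf_sum hmeas, mul_sum, exp_sum]
    exact prod_le_prod (fun _ _ ↦ mgf_nonneg) fun i hi ↦
      mgf_le_exp_of_zero_or_one (hmeas i) (h01 i hi) t
  rw [ENNReal.le_ofReal_iff_toReal_le (measure_ne_top _ _) (exp_pos _).le, exp_add]
  simpa only [Finset.sum_apply, measureReal_def] using (measure_ge_le_exp_mul_mgf a ht hint).trans
    (mul_le_mul_of_nonneg_left hmgf (exp_pos _).le)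

end Bernoulli

lemma one_div_mul_min_le_inv {s t : ℝ} (hs : 0 ≤ s) (ht : 0 ≤ t) :
    1 / s * min 1 (s / t) ≤ t⁻¹ := by
  rcases hs.eq_or_lt with rfl | hs
  · simpa using ht
  · calc 1 / s * min 1 (s / t) ≤ 1 / s * (s / t) := by gcongr; exact min_le_right _ _
      _ = t⁻¹ := by field_simp

lemma sum_Icc_inv_le_one_add_log (n : ℕ) : ∑ t ∈ Icc 1 n, (t : ℝ)⁻¹ ≤ 1 + log n := by
  simpa [harmonic_eq_sum_Icc] using harmonic_le_one_add_log n

lemma eq_one_or_eight_le_of_one_add_four_mul_logb_le {n : ℕ}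
    (h : 1 + 4 * logb 2 n ≤ n) : n = 1 ∨ 8 ≤ n := by
  rcases lt_trichotomy n 1 with hn0 | hn1 | hn2
  · obtain rfl : n = 0 := by omega
    norm_num at h
  · exact Or.inl hn1
  have hlog : ∀ k : ℕ, 2 ^ k ≤ n → (k : ℝ) ≤ logb 2 n := fun k hk ↦
    (le_logb_iff_rpow_le one_lt_two (by positivity)).2 (by exact_mod_cast hk)
  have h4 : 4 ≤ n := by
    have := hlog 1 (by omega)
    have : (4 : ℝ) < n := by push_cast at this; linarith
    exact_mod_cast this.le
  have := hlog 2 (by omega)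
  have : (8 : ℝ) < n := by push_cast at this; linarith
  exact Or.inr (by exact_mod_cast this.le)

lemma chernoff_exponent_le {n : ℕ} (hn : 8 ≤ n) {c : ℝ} (hc : 4 ≤ c) :
    -log 4 * (1 + c * logb 2 n) + (4 - 1) * (1 + log n) ≤ -c * log n := by
  have hlog2 : 0.6931471803 < log 2 := log_two_gt_d9
  have hlog4 : log 4 = 2 * log 2 := by
    rw [show (4 : ℝ) = 2 ^ 2 by norm_num, log_pow]; norm_num
  have hlogn : 3 * log 2 ≤ log n := by
    rw [← log_rpow two_pos]
    exact log_le_log (by positivity) (by norm_num; exact_mod_cast hn)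
  rw [logb, hlog4, mul_div_assoc']
  have : 2 * log 2 * (c * log n / log 2) = 2 * c * log n := by field_simp
  nlinarith

theorem slot_size_tail_bound_general {Ω : Type*} [MeasurableSpace Ω]
    (μ : Measure Ω) [IsProbabilityMeasure μ] (n s : ℕ)
    (c : ℝ) (hc : 4 ≤ c)
    (Y : ℕ → Ω → ℝ)
    (hmeas : ∀ t, Measurable (Y t))
    (hindep : ProbabilityTheory.iIndepFun Y μ)
    (hBer : ∀ t ∈ Finset.Icc 1 n, ∀ ω, Y t ω = 0 ∨ Y t ω = 1)
    (hprob : ∀ t ∈ Finset.Icc 1 n,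
      μ {ω | Y t ω = 1} = ENNReal.ofReal ((1 / (s : ℝ)) * min 1 ((s : ℝ) / t))) :
    μ {ω | 1 + c * Real.logb 2 n ≤ ∑ t ∈ Finset.Icc 1 n, Y t ω}
      ≤ ENNReal.ofReal ((n : ℝ) ^ (-c)) := by
  by_cases hn_lt : (n : ℝ) < 1 + c * logb 2 n
  · have hempty : {ω | 1 + c * logb 2 n ≤ ∑ t ∈ Icc 1 n, Y t ω} = ∅ := by
      refine Set.eq_empty_of_forall_notMem fun ω hω ↦ hn_lt.not_ge (le_trans hω ?_)
      calc ∑ t ∈ Icc 1 n, Y t ω ≤ #(Icc 1 n) • (1 : ℝ) :=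
            sum_le_card_nsmul _ _ _ fun t ht ↦ by rcases hBer t ht ω with h | h <;> simp [h]
        _ = n := by simp
    simp [hempty]
  have hlogb : 0 ≤ logb 2 n := div_nonneg (log_natCast_nonneg n) (log_nonneg one_le_two)
  rcases eq_one_or_eight_le_of_one_add_four_mul_logb_le (n := n) (by nlinarith) with rfl | hn
  · simpa using prob_le_one
  have hsum : ∑ t ∈ Icc 1 n, μ.real {ω | Y t ω = 1} ≤ 1 + log n := by
    refine (sum_le_sum fun t ht ↦ ?_).trans (sum_Icc_inv_le_one_add_log n)
    rw [measureReal_def, hprob t ht, ENNReal.toReal_ofReal']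
    exact max_le (one_div_mul_min_le_inv (by positivity) (by positivity)) (by positivity)
  refine (measure_le_sum_le_of_zero_or_one hmeas hindep hBer _
    (log_nonneg (by norm_num : (1 : ℝ) ≤ 4))).trans (ENNReal.ofReal_le_ofReal ?_)
  rw [exp_log (by norm_num), rpow_def_of_pos (by positivity)]
  calc _ ≤ exp (-log 4 * (1 + c * logb 2 n) + (4 - 1) * (1 + log n)) := by gcongr
    _ ≤ exp (log n * -c) := exp_le_exp.2 (by linarith [chernoff_exponent_le hn hc])

/-- Let `|R_i| = Σ_{t=1}^{n} Y_t` where the `Y_t` are independent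
Bernoulli variables with `P(Y_t = 1) = (1/s)·min(1, s/t)`, for `n ≥ s ≥ 1`.
Then for `c ≥ 4`, `P(|R_i| ≥ 1 + c·log₂ n) ≤ n^{-c}`. -/
theorem slot_size_tail_bound {Ω : Type*} [MeasurableSpace Ω]
    (μ : Measure Ω) [IsProbabilityMeasure μ] (n s : ℕ) (hs : 1 ≤ s) (hsn : s ≤ n)
    (c : ℝ) (hc : 4 ≤ c)
    (Y : ℕ → Ω → ℝ)
    (hmeas : ∀ t, Measurable (Y t))
    (hindep : ProbabilityTheory.iIndepFun Y μ)
    (hBer : ∀ t ∈ Finset.Icc 1 n, ∀ ω, Y t ω = 0 ∨ Y t ω = 1)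
    (hprob : ∀ t ∈ Finset.Icc 1 n,
      μ {ω | Y t ω = 1} = ENNReal.ofReal ((1 / (s : ℝ)) * min 1 ((s : ℝ) / t))) :
    μ {ω | 1 + c * Real.logb 2 n ≤ ∑ t ∈ Finset.Icc 1 n, Y t ω}
      ≤ ENNReal.ofReal ((n : ℝ) ^ (-c)) :=
  slot_size_tail_bound_general μ n s c hc Y hmeas hindep hBer hprob
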